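/- For every γ with 0 ≤ γ < 1/2 and every constant C > 0, there exist a continuous compactly supported function U ≥ 0 on ℝ and a bound state (f,E) of −d²/dx² − U such that E^γ > C ∫_ℝ U(x)^{γ+1/2} dx. Consequently the Lieb–Thirring inequality ∑ E_i^γ ≤ C ∫ (V_−)^{γ+1/2} cannot hold with any finite constant when d = 1 and γ < 1/2. -/

import Mathlib

open MeasureTheory Real

/-- `g` is the weak (distributional) derivative of `f` on `ℝ`. -/
def IsWeakDeriv (f g : ℝ → ℝ) : Prop :=
  ∀ φ : ℝ → ℝ, ContDiff ℝ (⊤ : ℕ∞) φ → HasCompactSupport φ →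
    ∫ x, f x * deriv φ x = - ∫ x, g x * φ x

/-- `f` lies in the Sobolev space `H¹(ℝ)`, with weak derivative `f'`. -/
def MemH1 (f f' : ℝ → ℝ) : Prop :=
  MemLp f 2 volume ∧ MemLp f' 2 volume ∧ IsWeakDeriv f f'

/-- `(f, E)` is a bound state of the Schrödinger operator `-d²/dx² - U`:
`f ∈ H¹(ℝ)` (with weak derivative `f'`) is nonzero, `E > 0`, and the weak
eigenvalue equation `-f'' - U f = -E f` holds against all test functions. -/
def IsBoundState (U f f' : ℝ → ℝ) (E : ℝ) : Prop :=
  MemH1 f f' ∧ ¬ (f =ᵐ[volume] (0 : ℝ → ℝ)) ∧ 0 < E ∧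
    ∀ φ : ℝ → ℝ, ContDiff ℝ (⊤ : ℕ∞) φ → HasCompactSupport φ →
      (∫ x, f' x * deriv φ x) - (∫ x, U x * (f x * φ x)) = -E * ∫ x, f x * φ x

open Set Filter Topology

noncomputable section LTaux

def aA (a : ℝ) : ℝ := 1 + (a^2 + 5*a)/8
def aB (a : ℝ) : ℝ := -((a+3)/(4*a))
def aD (a : ℝ) : ℝ := (a+1)/(8*a^3)
def Pt (a t : ℝ) : ℝ := aA a + aB a * t + aD a * t^2
def Qt (a t : ℝ) : ℝ := Pt a t - (2*aB a + 12*aD a * t)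
def Uf (a x : ℝ) : ℝ := Qt a (min (x^2) (a^2)) / Pt a (min (x^2) (a^2))
def ff (a x : ℝ) : ℝ :=
  if x ≤ -a then Real.exp x else if x ≤ a then Real.exp (-a) * Pt a (x^2) else Real.exp (-x)
def ff1 (a x : ℝ) : ℝ :=
  if x ≤ -a then Real.exp x else
    if x ≤ a then Real.exp (-a) * (2*aB a*x + 4*aD a*x^3) else -Real.exp (-x)
def ff2 (a x : ℝ) : ℝ :=
  if x ≤ -a then Real.exp x else
    if x ≤ a then Real.exp (-a) * (2*aB a + 12*aD a*x^2) else Real.exp (-x)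

variable {a : ℝ}

lemma lDpos (ha : 0 < a) : 0 < aD a := by
  unfold aD; positivity

lemma lPa (ha : 0 < a) : Pt a (a^2) = 1 := by
  unfold Pt aA aB aD; field_simp; ring

lemma lP'a (ha : 0 < a) : 2*aB a*a + 4*aD a*a^3 = -1 := by
  unfold aB aD; field_simp; ring

lemma lP''a (ha : 0 < a) : 2*aB a + 12*aD a*a^2 = 1 := by
  unfold aB aD; field_simp; ring

lemma lkey (ha : 0 < a) : aB a + 2*aD a*a^2 = -(1/(2*a)) := by
  unfold aB aD; field_simp; ring

lemma lQa (ha : 0 < a) : Qt a (a^2) = 0 := by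
  unfold Qt; rw [lPa ha]; linarith [lP''a ha]

lemma lP1 (ha : 0 < a) {t : ℝ} (ht0 : 0 ≤ t) (hta : t ≤ a^2) : 1 ≤ Pt a t := by
  have h : Pt a t - 1 = (t - a^2) * (aB a + aD a * (t + a^2)) := by
    have h1 := lPa ha
    unfold Pt at h1 ⊢
    linear_combination h1
  have hk := lkey ha
  have hd := lDpos ha
  have hpos : 0 < 1/(2*a) := by positivity
  have hfac : aB a + aD a * (t + a^2) ≤ -(1/(2*a)) := by nlinarith
  nlinarith [mul_nonneg (sub_nonneg.2 hta) (by linarith : (0:ℝ) ≤ -(aB a + aD a * (t + a^2)))]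

lemma lQ0 (ha : 0 < a) {t : ℝ} (ht0 : 0 ≤ t) (hta : t ≤ a^2) : 0 ≤ Qt a t := by
  have hz := lQa ha
  have h : Qt a t = (t - a^2) * (aB a - 12*aD a + aD a * (t + a^2)) := by
    unfold Qt Pt at hz ⊢
    linear_combination hz
  have hk := lkey ha
  have hd := lDpos ha
  have hpos : 0 < 1/(2*a) := by positivity
  have hfac : aB a - 12*aD a + aD a * (t + a^2) ≤ -(1/(2*a)) := by nlinarith
  nlinarith [mul_nonneg (sub_nonneg.2 hta) (by linarith : (0:ℝ) ≤ -(aB a - 12*aD a + aD a * (t + a^2)))]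

lemma lQM (ha : 0 < a) {t : ℝ} (ht0 : 0 ≤ t) (hta : t ≤ a^2) :
    Qt a t ≤ aA a - 2*aB a := by
  have h : Qt a t - (aA a - 2*aB a) = t * (aB a - 12*aD a + aD a * t) := by
    unfold Qt Pt; ring
  have hk := lkey ha
  have hd := lDpos ha
  have hpos : 0 < 1/(2*a) := by positivity
  have hfac : aB a - 12*aD a + aD a * t ≤ 0 := by nlinarith
  nlinarith [mul_nonneg ht0 (by linarith : (0:ℝ) ≤ -(aB a - 12*aD a + aD a * t))]

lemma lPmax (ha : 0 < a) {t : ℝ} (ht0 : 0 ≤ t) (hta : t ≤ a^2) : Pt a t ≤ aA a := by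
  have h : Pt a t - aA a = t * (aB a + aD a * t) := by unfold Pt; ring
  have hk := lkey ha
  have hd := lDpos ha
  have hpos : 0 < 1/(2*a) := by positivity
  have hfac : aB a + aD a * t ≤ 0 := by nlinarith
  nlinarith [mul_nonneg ht0 (by linarith : (0:ℝ) ≤ -(aB a + aD a * t))]

lemma lM4 (ha : 0 < a) (ha1 : a ≤ 1) : aA a - 2*aB a ≤ 4/a := by
  rw [le_div_iff₀ ha]
  have hexp : (aA a - 2*aB a) * a = a + (a^3 + 5*a^2)/8 + (a+3)/2 := by
    unfold aA aB; field_simp; ring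
  rw [hexp]
  have h2 : a^2 ≤ 1 := by nlinarith
  have h3 : a^3 ≤ 1 := by nlinarith
  nlinarith

lemma lAle2 (ha : 0 < a) (ha1 : a ≤ 1) : aA a ≤ 2 := by unfold aA; nlinarith

lemma lA1 (ha : 0 < a) : 1 ≤ aA a := by unfold aA; nlinarith


lemma glue_hasDerivAt {g h g' h' : ℝ → ℝ} {b : ℝ}
    (hg : ∀ x, HasDerivAt g (g' x) x) (hh : ∀ x, HasDerivAt h (h' x) x)
    (hval : g b = h b) (hder : g' b = h' b) (x : ℝ) :
    HasDerivAt (fun y => if y ≤ b then g y else h y) (if x ≤ b then g' x else h' x) x := by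
  rcases lt_trichotomy x b with hx | hx | hx
  · rw [if_pos hx.le]
    refine (hg x).congr_of_eventuallyEq ?_
    filter_upwards [Iio_mem_nhds hx] with y hy
    rw [if_pos (le_of_lt hy)]
  · rw [hx]
    rw [if_pos le_rfl]
    have h1 : HasDerivWithinAt (fun y => if y ≤ b then g y else h y) (g' b) (Iic b) b := by
      refine (hg b).hasDerivWithinAt.congr (fun y hy => ?_) (by simp)
      rw [if_pos (mem_Iic.mp hy)]
    have h2 : HasDerivWithinAt (fun y => if y ≤ b then g y else h y) (g' b) (Ici b) b := by
      rw [hder]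
      refine (hh b).hasDerivWithinAt.congr (fun y hy => ?_) (by simp [hval])
      by_cases hyb : y ≤ b
      · have : y = b := le_antisymm hyb (mem_Ici.mp hy)
        rw [if_pos hyb, this, hval]
      · rw [if_neg hyb]
    have h3 := h1.union h2
    rw [Iic_union_Ici] at h3
    exact h3.hasDerivAt (by simp)
  · rw [if_neg (not_le.mpr hx)]
    refine (hh x).congr_of_eventuallyEq ?_
    filter_upwards [Ioi_mem_nhds hx] with y hy
    rw [if_neg (not_le.mpr hy)]

lemma hasDerivAt_expneg (x : ℝ) :
    HasDerivAt (fun y : ℝ => Real.exp (-y)) (-Real.exp (-x)) x := by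
  simpa [Function.comp_def] using (Real.hasDerivAt_exp (-x)).comp x ((hasDerivAt_id x).neg)

lemma hasDerivAt_inner (a x : ℝ) :
    HasDerivAt (fun y => Real.exp (-a) * Pt a (y^2))
      (Real.exp (-a) * (2*aB a*x + 4*aD a*x^3)) x := by
  have h2 : HasDerivAt (fun y : ℝ => y^2) (2*x) x := by simpa using hasDerivAt_pow 2 x
  have h4 : HasDerivAt (fun y : ℝ => (y^2)^2) (4*x^3) x := by
    have he : (fun y : ℝ => (y^2)^2) = fun y : ℝ => y^4 := by funext y; ring
    rw [he]; simpa using hasDerivAt_pow 4 x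
  have h : HasDerivAt (fun y : ℝ => aA a + aB a * y^2 + aD a * (y^2)^2)
      (aB a * (2*x) + aD a * (4*x^3)) x := by
    have hb := h2.const_mul (aB a)
    have hd := h4.const_mul (aD a)
    exact ((hb.const_add (aA a)).add hd)
  have H := h.const_mul (Real.exp (-a))
  have heq : Real.exp (-a) * (aB a * (2*x) + aD a * (4*x^3))
      = Real.exp (-a) * (2*aB a*x + 4*aD a*x^3) := by ring
  rw [heq] at H
  exact H

lemma hasDerivAt_inner1 (a x : ℝ) :
    HasDerivAt (fun y => Real.exp (-a) * (2*aB a*y + 4*aD a*y^3))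
      (Real.exp (-a) * (2*aB a + 12*aD a*x^2)) x := by
  have h1 : HasDerivAt (fun y : ℝ => y) 1 x := hasDerivAt_id x
  have h3 : HasDerivAt (fun y : ℝ => y^3) (3*x^2) x := by simpa using hasDerivAt_pow 3 x
  have h : HasDerivAt (fun y : ℝ => 2*aB a*y + 4*aD a*y^3)
      (2*aB a*1 + 4*aD a*(3*x^2)) x := (h1.const_mul _).add (h3.const_mul _)
  have H := h.const_mul (Real.exp (-a))
  have heq : Real.exp (-a) * (2*aB a*1 + 4*aD a*(3*x^2))
      = Real.exp (-a) * (2*aB a + 12*aD a*x^2) := by ring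
  rw [heq] at H
  exact H

lemma ff_deriv (ha : 0 < a) (x : ℝ) : HasDerivAt (ff a) (ff1 a x) x := by
  have hG : ∀ y, HasDerivAt
      (fun z => if z ≤ a then Real.exp (-a) * Pt a (z^2) else Real.exp (-z))
      (if y ≤ a then Real.exp (-a) * (2*aB a*y + 4*aD a*y^3) else -Real.exp (-y)) y := by
    refine glue_hasDerivAt (hasDerivAt_inner a) hasDerivAt_expneg ?_ ?_
    · rw [lPa ha, mul_one]
    · rw [lP'a ha]; ring
  have H := glue_hasDerivAt (b := -a) (fun y => Real.hasDerivAt_exp y) hG ?_ ?_ x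
  · exact H
  · rw [if_pos (by linarith : -a ≤ a), show ((-a : ℝ))^2 = a^2 by ring, lPa ha, mul_one]
  · rw [if_pos (by linarith : -a ≤ a)]
    linear_combination Real.exp (-a) * lP'a ha

lemma ff1_deriv (ha : 0 < a) (x : ℝ) : HasDerivAt (ff1 a) (ff2 a x) x := by
  have hG : ∀ y, HasDerivAt
      (fun z => if z ≤ a then Real.exp (-a) * (2*aB a*z + 4*aD a*z^3) else -Real.exp (-z))
      (if y ≤ a then Real.exp (-a) * (2*aB a + 12*aD a*y^2) else Real.exp (-y)) y := by
    refine glue_hasDerivAt (hasDerivAt_inner1 a) (fun y => by have h := (hasDerivAt_expneg y).neg; rw [neg_neg] at h; exact h) ?_ ?_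
    · rw [lP'a ha]; ring
    · rw [lP''a ha, mul_one]
  have H := glue_hasDerivAt (b := -a) (fun y => Real.hasDerivAt_exp y) hG ?_ ?_ x
  · exact H
  · rw [if_pos (by linarith : -a ≤ a)]
    linear_combination Real.exp (-a) * lP'a ha
  · rw [if_pos (by linarith : -a ≤ a), show ((-a : ℝ))^2 = a^2 by ring, lP''a ha, mul_one]

lemma ff_cont (ha : 0 < a) : Continuous (ff a) := by
  have hd : Differentiable ℝ (ff a) := fun x => (ff_deriv ha x).differentiableAt
  exact hd.continuous

lemma ff1_cont (ha : 0 < a) : Continuous (ff1 a) := by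
  have hd : Differentiable ℝ (ff1 a) := fun x => (ff1_deriv ha x).differentiableAt
  exact hd.continuous

lemma lODE (ha : 0 < a) (x : ℝ) : ff2 a x + Uf a x * ff a x = ff a x := by
  by_cases h1 : x ≤ -a
  · have hx2 : a^2 ≤ x^2 := by nlinarith
    have hmin : min (x^2) (a^2) = a^2 := min_eq_right hx2
    simp [ff, ff2, Uf, h1, hmin, lQa ha]
  by_cases h2 : x ≤ a
  · have hx1 : -a < x := not_le.mp h1
    have hx2 : x^2 ≤ a^2 := by nlinarith
    have hmin : min (x^2) (a^2) = x^2 := min_eq_left hx2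
    have hP : 1 ≤ Pt a (x^2) := lP1 ha (sq_nonneg x) hx2
    have hPne : Pt a (x^2) ≠ 0 := by linarith
    simp only [ff, ff2, Uf, h1, h2, if_neg, if_pos, if_false, if_true, hmin]
    field_simp
    unfold Qt
    ring
  · have hx1 : a < x := not_le.mp h2
    have hx2 : a^2 ≤ x^2 := by nlinarith
    have hmin : min (x^2) (a^2) = a^2 := min_eq_right hx2
    simp [ff, ff2, Uf, h1, h2, hmin, lQa ha]

lemma ff2_eq (ha : 0 < a) : ff2 a = fun x => ff a x - Uf a x * ff a x := by
  funext x; linarith [lODE ha x]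

lemma lUcont (ha : 0 < a) : Continuous (Uf a) := by
  have hmin : Continuous fun x : ℝ => min (x^2) (a^2) := (continuous_pow 2).min continuous_const
  have hQc : Continuous (Qt a) := by unfold Qt Pt; continuity
  have hPc : Continuous (Pt a) := by unfold Pt; continuity
  refine (hQc.comp hmin).div (hPc.comp hmin) fun x => ?_
  have := lP1 ha (le_min (sq_nonneg x) (sq_nonneg a)) (min_le_right _ _)
  dsimp; linarith

lemma lUouter (ha : 0 < a) {x : ℝ} (hx : x ∉ Icc (-a) a) : Uf a x = 0 := by
  have hx2 : a^2 ≤ x^2 := by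
    have hx' : x < -a ∨ a < x := by
      by_contra h
      push_neg at h
      exact hx ⟨h.1, h.2⟩
    rcases hx' with h | h <;> nlinarith
  unfold Uf; rw [min_eq_right hx2, lQa ha, zero_div]

lemma lUsupp (ha : 0 < a) : HasCompactSupport (Uf a) :=
  HasCompactSupport.intro isCompact_Icc fun _ hx => lUouter ha hx

lemma lU0 (ha : 0 < a) (x : ℝ) : 0 ≤ Uf a x := by
  have h0 : 0 ≤ min (x^2) (a^2) := le_min (sq_nonneg x) (sq_nonneg a)
  have h1 : min (x^2) (a^2) ≤ a^2 := min_le_right _ _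
  exact div_nonneg (lQ0 ha h0 h1) (by linarith [lP1 ha h0 h1])

lemma lUB (ha : 0 < a) (ha1 : a ≤ 1) (x : ℝ) : Uf a x ≤ 4/a := by
  have h0 : 0 ≤ min (x^2) (a^2) := le_min (sq_nonneg x) (sq_nonneg a)
  have h1 : min (x^2) (a^2) ≤ a^2 := min_le_right _ _
  have hQ := lQ0 ha h0 h1
  have hP := lP1 ha h0 h1
  calc Uf a x ≤ Qt a (min (x^2) (a^2)) := div_le_self hQ hP
    _ ≤ aA a - 2*aB a := lQM ha h0 h1
    _ ≤ 4/a := lM4 ha ha1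


lemma lfb (ha : 0 < a) (ha1 : a ≤ 1) (x : ℝ) : |ff a x| ≤ 2 * Real.exp (-|x|) := by
  have hex : (0:ℝ) < Real.exp (-|x|) := Real.exp_pos _
  by_cases h1 : x ≤ -a
  · have : ff a x = Real.exp (-|x|) := by
      rw [show ff a x = Real.exp x from if_pos h1, abs_of_nonpos (by linarith), neg_neg]
    rw [this, abs_of_pos hex]; linarith
  by_cases h2 : x ≤ a
  · have hx1 : -a < x := not_le.mp h1
    have hx2 : x^2 ≤ a^2 := by nlinarith
    have hP1 : 1 ≤ Pt a (x^2) := lP1 ha (sq_nonneg x) hx2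
    have hPA : Pt a (x^2) ≤ aA a := lPmax ha (sq_nonneg x) hx2
    have hA2 : aA a ≤ 2 := lAle2 ha ha1
    have hval : ff a x = Real.exp (-a) * Pt a (x^2) := by
      unfold ff; rw [if_neg h1, if_pos h2]
    have hle : Real.exp (-a) ≤ Real.exp (-|x|) := by
      apply Real.exp_le_exp.mpr
      have : |x| ≤ a := abs_le.mpr ⟨by linarith, h2⟩
      linarith
    rw [hval, abs_of_pos (by positivity)]
    nlinarith [Real.exp_pos (-a)]
  · have hx1 : a < x := not_le.mp h2
    have : ff a x = Real.exp (-|x|) := by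
      rw [show ff a x = Real.exp (-x) by unfold ff; rw [if_neg h1, if_neg h2],
        abs_of_pos (by linarith)]
    rw [this, abs_of_pos hex]; linarith

lemma lf1b (ha : 0 < a) (ha1 : a ≤ 1) (x : ℝ) : |ff1 a x| ≤ 2 * Real.exp (-|x|) := by
  have hex : (0:ℝ) < Real.exp (-|x|) := Real.exp_pos _
  by_cases h1 : x ≤ -a
  · have : ff1 a x = Real.exp (-|x|) := by
      rw [show ff1 a x = Real.exp x from if_pos h1, abs_of_nonpos (by linarith), neg_neg]
    rw [this, abs_of_pos hex]; linarith
  by_cases h2 : x ≤ a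
  · have hx1 : -a < x := not_le.mp h1
    have hxa : |x| ≤ a := abs_le.mpr ⟨by linarith, h2⟩
    have hx2 : x^2 ≤ a^2 := by nlinarith [sq_abs x, sq_nonneg (|x| - a), abs_nonneg x]
    have hval : ff1 a x = Real.exp (-a) * (2*aB a*x + 4*aD a*x^3) := by
      unfold ff1; rw [if_neg h1, if_pos h2]
    have hd := lDpos ha
    have hk := lkey ha
    have hpos2 : 0 < 1/(2*a) := by positivity
    have hBneg : aB a + 2*aD a*x^2 ≤ 0 := by
      nlinarith [mul_nonneg hd.le (sub_nonneg.2 hx2)]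
    have hBlow : aB a ≤ aB a + 2*aD a*x^2 := by nlinarith
    have habs1 : |aB a + 2*aD a*x^2| ≤ -aB a := by
      rw [abs_of_nonpos hBneg]; linarith
    have hfact : |2*aB a*x + 4*aD a*x^3| ≤ 2 := by
      rw [show 2*aB a*x + 4*aD a*x^3 = (2*x) * (aB a + 2*aD a*x^2) by ring, abs_mul]
      have h2x : |2*x| ≤ 2*a := by rw [abs_mul, abs_two]; nlinarith [abs_nonneg x]
      have hmB : -aB a ≤ (a+3)/(4*a) := by unfold aB; simp
      calc |2*x| * |aB a + 2*aD a*x^2| ≤ (2*a) * ((a+3)/(4*a)) := by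
            apply mul_le_mul h2x (habs1.trans hmB) (abs_nonneg _) (by linarith)
        _ = (a+3)/2 := by field_simp; ring
        _ ≤ 2 := by linarith
    have hle : Real.exp (-a) ≤ Real.exp (-|x|) := Real.exp_le_exp.mpr (by linarith)
    rw [hval, abs_mul, abs_of_pos (Real.exp_pos _)]
    nlinarith [Real.exp_pos (-a), abs_nonneg (2*aB a*x + 4*aD a*x^3)]
  · have hx1 : a < x := not_le.mp h2
    have : |ff1 a x| = Real.exp (-|x|) := by
      rw [show ff1 a x = -Real.exp (-x) by unfold ff1; rw [if_neg h1, if_neg h2],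
        abs_neg, abs_of_pos (Real.exp_pos _), abs_of_pos (by linarith)]
    rw [this]; linarith

lemma expabs_integrable : Integrable (fun x : ℝ => Real.exp (-|x|)) := by
  have h1 : IntegrableOn (fun x : ℝ => Real.exp (-|x|)) (Iic 0) := by
    refine (integrableOn_exp_Iic 0).congr_fun (fun x hx => ?_) measurableSet_Iic
    rw [abs_of_nonpos (mem_Iic.mp hx), neg_neg]
  have h2 : IntegrableOn (fun x : ℝ => Real.exp (-|x|)) (Ioi 0) := by
    refine (exp_neg_integrableOn_Ioi 0 (by norm_num : (0:ℝ) < 1)).congr_fun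
      (fun x hx => ?_) measurableSet_Ioi
    rw [abs_of_pos (mem_Ioi.mp hx)]; norm_num
  have h3 := h1.union h2
  rwa [Iic_union_Ioi, integrableOn_univ] at h3

lemma expabs_cont : Continuous (fun x : ℝ => Real.exp (-|x|)) :=
  Real.continuous_exp.comp continuous_abs.neg

lemma expabs_memL2 : MemLp (fun x : ℝ => Real.exp (-|x|)) 2 volume := by
  rw [memLp_two_iff_integrable_sq expabs_cont.aestronglyMeasurable]
  refine expabs_integrable.mono ((expabs_cont.pow 2).aestronglyMeasurable) ?_
  refine Eventually.of_forall fun x => ?_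
  have h1 : Real.exp (-|x|) ≤ 1 := Real.exp_le_one_iff.mpr (neg_nonpos.mpr (abs_nonneg x))
  have h0 : (0:ℝ) < Real.exp (-|x|) := Real.exp_pos _
  rw [Real.norm_eq_abs, Real.norm_eq_abs, abs_of_nonneg (sq_nonneg _), abs_of_pos h0]
  nlinarith

lemma memL2_of_expabs_bound {u : ℝ → ℝ} (hc : Continuous u)
    (hb : ∀ x, |u x| ≤ 2 * Real.exp (-|x|)) : MemLp u 2 volume := by
  refine MemLp.of_le (expabs_memL2.const_mul 2) hc.aestronglyMeasurable ?_
  refine Eventually.of_forall fun x => ?_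
  rw [Real.norm_eq_abs, Real.norm_eq_abs]
  have := hb x
  have h0 : (0:ℝ) < Real.exp (-|x|) := Real.exp_pos _
  rw [abs_of_pos (by positivity : (0:ℝ) < 2 * Real.exp (-|x|))]
  exact this

lemma ibp {u u' : ℝ → ℝ} (hu : ∀ x, HasDerivAt u (u' x) x) (hc : Continuous u')
    {φ : ℝ → ℝ} (hφ : ContDiff ℝ (⊤ : ℕ∞) φ) (hφs : HasCompactSupport φ) :
    ∫ x, u x * deriv φ x = - ∫ x, u' x * φ x := by
  have huc : Continuous u := by
    have hd : Differentiable ℝ u := fun x => (hu x).differentiableAt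
    exact hd.continuous
  have hφc : Continuous φ := hφ.continuous
  have hφ'c : Continuous (deriv φ) := hφ.continuous_deriv (by simp)
  have hφd : ∀ x, HasDerivAt φ (deriv φ x) x := fun x =>
    (hφ.differentiable (by simp) x).hasDerivAt
  have hψd : ∀ x, HasDerivAt (fun y => u y * φ y) (u' x * φ x + u x * deriv φ x) x :=
    fun x => (hu x).mul (hφd x)
  have hψs : HasCompactSupport (fun y => u y * φ y) := hφs.mul_left
  have h1 : Integrable (fun x => u' x * φ x) :=
    (hc.mul hφc).integrable_of_hasCompactSupport hφs.mul_left
  have h2 : Integrable (fun x => u x * deriv φ x) :=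
    (huc.mul hφ'c).integrable_of_hasCompactSupport hφs.deriv.mul_left
  have hsum : Integrable (fun x => u' x * φ x + u x * deriv φ x) volume := h1.add h2
  have h2f := hasCompactSupport_iff_eventuallyEq.mp hψs
  rw [Filter.coclosedCompact_eq_cocompact] at h2f
  have htop : Tendsto (fun y => u y * φ y) atTop (𝓝 0) :=
    (h2f.filter_mono _root_.atTop_le_cocompact).tendsto
  have hbot : Tendsto (fun y => u y * φ y) atBot (𝓝 0) :=
    (h2f.filter_mono _root_.atBot_le_cocompact).tendsto
  have I2 : ∫ x in Ioi 0, (u' x * φ x + u x * deriv φ x) = 0 - u 0 * φ 0 :=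
    integral_Ioi_of_hasDerivAt_of_tendsto' (fun x _ => hψd x) hsum.integrableOn htop
  have I1 : ∫ x in Iic 0, (u' x * φ x + u x * deriv φ x) = u 0 * φ 0 - 0 :=
    integral_Iic_of_hasDerivAt_of_tendsto' (fun x _ => hψd x) hsum.integrableOn hbot
  have I0 : ∫ x, (u' x * φ x + u x * deriv φ x) = 0 := by
    rw [← intervalIntegral.integral_Iic_add_Ioi hsum.integrableOn hsum.integrableOn, I1, I2]; ring
  rw [integral_add h1 h2] at I0
  linarith

end LTaux

/-- **Failure of the Lieb–Thirring inequality for `d = 1`, `γ < 1/2`**: for every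
`0 ≤ γ < 1/2` and every constant `C > 0` there are a continuous compactly supported
potential `U ≥ 0` and a bound state `(f, E)` of `-d²/dx² - U` with
`E^γ > C ∫ U^(γ+1/2)`; hence no finite constant works for `γ < 1/2`. -/
theorem no_lieb_thirring_below_one_half
    (γ : ℝ) (hγ0 : 0 ≤ γ) (hγ : γ < 1 / 2) (C : ℝ) (hC : 0 < C) :
    ∃ U : ℝ → ℝ, Continuous U ∧ HasCompactSupport U ∧ (∀ x, 0 ≤ U x) ∧
      ∃ f f' : ℝ → ℝ, ∃ E : ℝ, IsBoundState U f f' E ∧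
        C * ∫ x, U x ^ (γ + 1 / 2) < E ^ γ := by
  have hp0 : (0:ℝ) < γ + 1/2 := by linarith
  have hp1 : γ + 1/2 < 1 := by linarith
  set p : ℝ := γ + 1/2 with hpdef
  set q : ℝ := 1 - p with hqdef
  have hq0 : 0 < q := by rw [hqdef]; linarith
  have hbase : (0:ℝ) < (8*C+1)⁻¹ := by positivity
  set a0 : ℝ := ((8*C+1)⁻¹) ^ (q⁻¹) with ha0def
  have ha0 : 0 < a0 := Real.rpow_pos_of_pos hbase _
  set a : ℝ := min 1 a0 with hadef
  have ha : 0 < a := lt_min one_pos ha0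
  have ha1 : a ≤ 1 := min_le_left _ _
  refine ⟨Uf a, lUcont ha, lUsupp ha, lU0 ha, ff a, ff1 a, 1,
    ⟨⟨?_, ?_, ?_⟩, ?_, one_pos, ?_⟩, ?_⟩
  · exact memL2_of_expabs_bound (ff_cont ha) (lfb ha ha1)
  · exact memL2_of_expabs_bound (ff1_cont ha) (lf1b ha ha1)
  · exact fun φ hφ hφs => ibp (ff_deriv ha) (ff1_cont ha) hφ hφs
  · intro h
    have heq : ff a = (fun _ => (0:ℝ)) :=
      ((ff_cont ha).ae_eq_iff_eq volume continuous_const).mp h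
    have h0 : ff a 0 = 0 := congrFun heq 0
    have hv : ff a 0 = Real.exp (-a) * Pt a ((0:ℝ)^2) := by
      unfold ff; rw [if_neg (by linarith : ¬ (0:ℝ) ≤ -a), if_pos (by linarith : (0:ℝ) ≤ a)]
    have hP : 1 ≤ Pt a ((0:ℝ)^2) :=
      lP1 ha (by norm_num) (by simpa using sq_nonneg a)
    nlinarith [Real.exp_pos (-a)]
  · intro φ hφ hφs
    have hφc := hφ.continuous
    have hff2c : Continuous (ff2 a) := by
      rw [ff2_eq ha]; exact (ff_cont ha).sub ((lUcont ha).mul (ff_cont ha))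
    have h1 : ∫ x, ff1 a x * deriv φ x = - ∫ x, ff2 a x * φ x :=
      ibp (ff1_deriv ha) hff2c hφ hφs
    have hint2 : Integrable (fun x => ff2 a x * φ x) :=
      (hff2c.mul hφc).integrable_of_hasCompactSupport hφs.mul_left
    have hint3 : Integrable (fun x => Uf a x * (ff a x * φ x)) :=
      ((lUcont ha).mul ((ff_cont ha).mul hφc)).integrable_of_hasCompactSupport
        hφs.mul_left.mul_left
    have hkey : (fun x => ff2 a x * φ x + Uf a x * (ff a x * φ x))
        = fun x => ff a x * φ x := by
      funext x; linear_combination φ x * lODE ha x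
    have hAB : (∫ x, ff2 a x * φ x) + ∫ x, Uf a x * (ff a x * φ x)
        = ∫ x, ff a x * φ x := by
      rw [← integral_add hint2 hint3]
      exact congrArg (fun g => ∫ x, g x) hkey
    rw [h1]
    linarith [hAB]
  · rw [Real.one_rpow]
    have hUout : ∀ x ∉ Icc (-a) a, Uf a x ^ p = 0 := fun x hx => by
      rw [lUouter ha hx, Real.zero_rpow hp0.ne']
    have heq : ∫ x in Icc (-a) a, Uf a x ^ p = ∫ x, Uf a x ^ p :=
      setIntegral_eq_integral_of_forall_compl_eq_zero hUout
    have hbnd : ‖∫ x in Icc (-a) a, Uf a x ^ p‖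
        ≤ (4/a)^p * (volume (Icc (-a) a)).toReal := by
      refine norm_setIntegral_le_of_norm_le_const ?_ fun x _ => ?_
      · exact measure_Icc_lt_top
      · rw [Real.norm_eq_abs, abs_of_nonneg (Real.rpow_nonneg (lU0 ha x) _)]
        exact Real.rpow_le_rpow (lU0 ha x) (lUB ha ha1 x) hp0.le
    have hvol : (volume (Icc (-a) a)).toReal = 2*a := by
      rw [Real.volume_Icc, ENNReal.toReal_ofReal (by linarith)]; ring
    have hIle : ∫ x, Uf a x ^ p ≤ (4/a)^p * (2*a) := by
      rw [← heq]
      calc ∫ x in Icc (-a) a, Uf a x ^ p ≤ ‖∫ x in Icc (-a) a, Uf a x ^ p‖ :=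
            le_abs_self _
        _ ≤ (4/a)^p * (volume (Icc (-a) a)).toReal := hbnd
        _ = (4/a)^p * (2*a) := by rw [hvol]
    have hap : (0:ℝ) < a ^ p := Real.rpow_pos_of_pos ha _
    have hsplit : (4/a)^p * (2*a) = 2 * 4^p * a^q := by
      rw [Real.div_rpow (by norm_num) ha.le, hqdef, Real.rpow_sub ha, Real.rpow_one]
      field_simp
    have h4p : (4:ℝ)^p ≤ 4 := by
      calc (4:ℝ)^p ≤ (4:ℝ)^(1:ℝ) :=
            Real.rpow_le_rpow_of_exponent_le (by norm_num) (le_of_lt hp1)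
        _ = 4 := Real.rpow_one 4
    have h4p0 : (0:ℝ) < (4:ℝ)^p := Real.rpow_pos_of_pos (by norm_num) _
    have haq0 : (0:ℝ) ≤ a ^ q := (Real.rpow_pos_of_pos ha _).le
    have haq : a ^ q ≤ (8*C+1)⁻¹ := by
      calc a ^ q ≤ a0 ^ q := Real.rpow_le_rpow ha.le (min_le_right _ _) hq0.le
        _ = (8*C+1)⁻¹ := by
          rw [ha0def, ← Real.rpow_mul hbase.le, inv_mul_cancel₀ hq0.ne', Real.rpow_one]
    have hinv : (8*C+1) * (8*C+1)⁻¹ = 1 := mul_inv_cancel₀ (by positivity)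
    have hfinal : C * ((4/a)^p * (2*a)) < 1 := by
      rw [hsplit]
      have h8 : 2 * (4:ℝ)^p ≤ 8 := by linarith
      have hstep : C * (2 * 4^p * a^q) ≤ C * (8 * (8*C+1)⁻¹) := by
        apply mul_le_mul_of_nonneg_left _ hC.le
        calc 2 * 4^p * a^q ≤ 8 * a^q := by nlinarith
          _ ≤ 8 * (8*C+1)⁻¹ := by nlinarith
      have : C * (8 * (8*C+1)⁻¹) < 1 := by
        rw [show C * (8 * (8*C+1)⁻¹) = (8*C) * (8*C+1)⁻¹ by ring]
        nlinarith [hbase]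
      linarith
    calc C * ∫ x, Uf a x ^ p ≤ C * ((4/a)^p * (2*a)) :=
          mul_le_mul_of_nonneg_left hIle hC.le
      _ < 1 := hfinal
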